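/- Fix an integer r ≥ 1. Let g_r(x,y) = Σ_{n≥0} Σ_{p≥0} c_r(n,p) x^n y^p ∈ ℚ[[x,y]], let F(x) = g_r(x,0), and let J(x,y) denote the formal antiderivative of g_r in the variable y with J(x,0) = 0 (so ∂J/∂y = g_r). Then (1 - (r+1)x^{r+2}(1-y))·g_r(x,y) = (1 - (r+1)x^{r+2})·F(x) + x·(∂/∂x)[x^{r+2}·J(x,y)], where ∂/∂x is the formal partial derivative in x. -/

import Mathlib

/-- Steps of a Motzkin path: up, horizontal, down. -/
inductive Step : Type
  | U | H | D
  deriving DecidableEq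

/-- A list of steps is a Motzkin path if every prefix has at least as many
up steps as down steps, and the total numbers of up and down steps agree. -/
def IsMotzkin (l : List Step) : Prop :=
  (∀ k : ℕ, (l.take k).count Step.D ≤ (l.take k).count Step.U) ∧
    l.count Step.U = l.count Step.D

/-- The number of plateaus of length `r` (occurrences of a U step, then `r`
consecutive H steps, then a D step) in a path. -/
def plateauCountR (r : ℕ) (l : List Step) : ℕ :=
  ((Finset.range l.length).filter
    (fun i => (l.drop i).take (r + 2)
      = Step.U :: (List.replicate r Step.H ++ [Step.D]))).card

/-- `cR r n p` is the number of Motzkin paths of length `n` with exactly `p`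
plateaus of length `r`; it is `0` when `n < 0` or `p < 0`. -/
noncomputable def cR (r : ℕ) (n p : ℤ) : ℕ :=
  if 0 ≤ n ∧ 0 ≤ p then
    Nat.card {l : List Step // l.length = n.toNat ∧ IsMotzkin l ∧ plateauCountR r l = p.toNat}
  else 0

namespace MP
open List

def pat (r : ℕ) : List Step := Step.U :: (List.replicate r Step.H ++ [Step.D])

lemma pat_length (r : ℕ) : (pat r).length = r + 2 := by simp [pat]

def IsPl (r : ℕ) (l : List Step) (i : ℕ) : Prop := (l.drop i).take (r+2) = pat r

instance (r l i) : Decidable (IsPl r l i) := by unfold IsPl; infer_instance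

lemma isPl_le_length {r : ℕ} {l : List Step} {i : ℕ} (h : IsPl r l i) :
    i + (r + 2) ≤ l.length := by
  have := congrArg List.length h
  simp [pat_length, List.length_take, List.length_drop] at this
  omega

lemma isPl_iff_drop {r : ℕ} {l : List Step} {i : ℕ} :
    IsPl r l i ↔ l.drop i = pat r ++ l.drop (i + (r+2)) := by
  constructor
  · intro h
    conv_lhs => rw [← List.take_append_drop (r+2) (l.drop i)]
    rw [h, List.drop_drop]
  · intro h
    unfold IsPl
    rw [h, ← pat_length r, List.take_left]

lemma isPl_getElem? {r : ℕ} {l : List Step} {i : ℕ} (h : IsPl r l i) (k : ℕ)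
    (hk : k < r + 2) : l[i + k]? = (pat r)[k]? := by
  rw [isPl_iff_drop] at h
  have : l[i+k]? = (l.drop i)[k]? := by
    rw [List.getElem?_drop]
  rw [this, h, List.getElem?_append_left (by rw [pat_length]; omega)]

lemma pat_getElem?_zero (r : ℕ) : (pat r)[0]? = some Step.U := by simp [pat]

lemma pat_getElem?_ne_U {r k : ℕ} (hk : 1 ≤ k) : (pat r)[k]? ≠ some Step.U := by
  intro h
  obtain ⟨k', rfl⟩ : ∃ k', k = k' + 1 := ⟨k - 1, by omega⟩
  have h2 : (List.replicate r Step.H ++ [Step.D])[k']? = some Step.U := by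
    simpa [pat] using h
  have := List.mem_of_getElem? h2
  simp [List.mem_append, List.eq_of_mem_replicate] at this

lemma isPl_disjoint {r : ℕ} {l : List Step} {i i' : ℕ} (h : IsPl r l i)
    (h' : IsPl r l i') (h1 : i < i') (h2 : i' < i + (r+2)) : False := by
  have e1 : l[i']? = some Step.U := by
    have := isPl_getElem? h' 0 (by omega)
    simpa [pat_getElem?_zero] using this
  have e2 : l[i + (i' - i)]? = (pat r)[i' - i]? := isPl_getElem? h (i' - i) (by omega)
  rw [show i + (i' - i) = i' by omega] at e2
  exact pat_getElem?_ne_U (by omega) (e2 ▸ e1)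

end MP

namespace MP
open List

variable {r : ℕ} {Q l : List Step} {i j : ℕ}

def ins (r : ℕ) (Q : List Step) (j : ℕ) : List Step := Q.take j ++ (pat r ++ Q.drop j)

def rem (r : ℕ) (l : List Step) (i : ℕ) : List Step := l.take i ++ l.drop (i + (r+2))

lemma ins_length (hj : j ≤ Q.length) : (ins r Q j).length = Q.length + (r+2) := by
  simp [ins, pat_length]
  omega

lemma take_ins (hj : j ≤ Q.length) : (ins r Q j).take j = Q.take j := by
  rw [ins, List.take_append]
  simp [List.take_take]
  omega

lemma ins_drop_of_le (h : j ≤ i) (hj : j ≤ Q.length) :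
    (ins r Q j).drop (i + (r+2)) = Q.drop i := by
  rw [ins, ← List.append_assoc, List.drop_append]
  have h1 : (Q.take j ++ pat r).length = j + (r+2) := by simp [pat_length]; omega
  rw [List.drop_eq_nil_of_le (by omega), List.nil_append, h1, List.drop_drop]
  congr 1
  omega

lemma drop_ins (hj : j ≤ Q.length) : (ins r Q j).drop j = pat r ++ Q.drop j := by
  rw [ins, List.drop_append]
  have h1 : (Q.take j).length = j := by simp; omega
  rw [List.drop_eq_nil_of_le (le_of_eq h1), List.nil_append, h1, Nat.sub_self,
    List.drop_zero]

lemma isPl_ins_self (hj : j ≤ Q.length) : IsPl r (ins r Q j) j := by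
  rw [isPl_iff_drop, drop_ins hj, ins_drop_of_le le_rfl hj]

lemma isPl_ins_right (hj : j ≤ Q.length) (h : j ≤ i) :
    IsPl r (ins r Q j) (i + (r+2)) ↔ IsPl r Q i := by
  unfold IsPl
  have hd : (ins r Q j).drop (i + (r+2)) = Q.drop i := ins_drop_of_le h hj
  rw [hd]

lemma isPl_ins_left (hj : j ≤ Q.length) (h : i + (r+2) ≤ j) :
    IsPl r (ins r Q j) i ↔ IsPl r Q i := by
  unfold IsPl
  have h1 : (ins r Q j).drop i = (Q.take j).drop i ++ (pat r ++ Q.drop j) := by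
    rw [ins, List.drop_append, Nat.sub_eq_zero_of_le (by simp; omega),
      List.drop_zero]
  rw [h1, List.take_append]
  have h2 : ((Q.take j).drop i).length = j - i := by simp; omega
  rw [h2, Nat.sub_eq_zero_of_le (by omega), List.take_zero, List.append_nil,
    List.drop_take]
  rw [List.take_take, min_eq_left (by omega)]

lemma isPl_ins_iff (hj : j ≤ Q.length) (i : ℕ) :
    IsPl r (ins r Q j) i ↔
      i = j ∨ (IsPl r Q i ∧ i + (r+2) ≤ j) ∨
        (∃ i₀, IsPl r Q i₀ ∧ j ≤ i₀ ∧ i = i₀ + (r+2)) := by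
  constructor
  · intro h
    rcases Nat.lt_or_ge (i + (r+2)) (j+1) with h1 | h1
    · exact Or.inr (Or.inl ⟨(isPl_ins_left hj (by omega)).1 h, by omega⟩)
    rcases Nat.lt_or_ge i j with h2 | h2
    · exact absurd (isPl_disjoint h (isPl_ins_self hj) h2 (by omega)) (by simp)
    rcases Nat.eq_or_lt_of_le h2 with h3 | h3
    · exact Or.inl h3.symm
    rcases Nat.lt_or_ge i (j + (r+2)) with h4 | h4
    · exact absurd (isPl_disjoint (isPl_ins_self hj) h h3 (by omega)) (by simp)
    · refine Or.inr (Or.inr ⟨i - (r+2), ?_, by omega, by omega⟩)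
      refine (isPl_ins_right hj (show j ≤ i - (r+2) by omega)).1 ?_
      rw [show i - (r+2) + (r+2) = i by omega]
      exact h
  · rintro (rfl | ⟨h, hle⟩ | ⟨i₀, h, hle, rfl⟩)
    · exact isPl_ins_self hj
    · exact (isPl_ins_left hj hle).2 h
    · exact (isPl_ins_right hj hle).2 h

lemma ins_rem (h : IsPl r l i) : ins r (rem r l i) i = l := by
  have hi : i ≤ l.length := by have := isPl_le_length h; omega
  have h1 : (rem r l i).take i = l.take i := by
    rw [rem, List.take_append, List.take_take, min_self,
      Nat.sub_eq_zero_of_le (by simp; omega), List.take_zero, List.append_nil]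
  have h2 : (rem r l i).drop i = l.drop (i + (r+2)) := by
    rw [rem, List.drop_append, List.drop_eq_nil_of_le (by simp),
      Nat.sub_eq_zero_of_le (by simp; omega), List.nil_append, List.drop_zero]
  rw [ins, h1, h2, ← (isPl_iff_drop.1 h), List.take_append_drop]

lemma rem_ins (hj : j ≤ Q.length) : rem r (ins r Q j) j = Q := by
  rw [rem, take_ins hj, ins_drop_of_le le_rfl hj, List.take_append_drop]

lemma rem_length (h : IsPl r l i) : (rem r l i).length = l.length - (r+2) := by
  have := isPl_le_length h
  simp [rem]
  omega

end MP

namespace MP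
open List

variable {r : ℕ} {Q l : List Step} {i j : ℕ}

lemma count_pat_U : (pat r).count Step.U = 1 := by
  simp [pat, List.count_append, List.count_replicate, List.count_cons]

lemma count_pat_D : (pat r).count Step.D = 1 := by
  simp [pat, List.count_append, List.count_replicate, List.count_cons]

lemma count_pat_take (s : ℕ) :
    ((pat r).take s).count Step.D ≤ ((pat r).take s).count Step.U := by
  cases s with
  | zero => simp
  | succ s =>
    have h1 : ((pat r).take (s+1)).count Step.D ≤ (pat r).count Step.D :=
      (List.take_sublist _ _).count_le _
    rw [count_pat_D] at h1
    have h3 : (pat r).take (s+1)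
        = Step.U :: ((List.replicate r Step.H ++ [Step.D]).take s) := by simp [pat]
    have h4 : 1 ≤ ((pat r).take (s+1)).count Step.U := by
      rw [h3, List.count_cons]
      simp
    omega

lemma take_ins_of_le (hj : j ≤ Q.length) (hk : i ≤ j) :
    (ins r Q j).take i = Q.take i :=
  calc (ins r Q j).take i = ((ins r Q j).take j).take i := by
        rw [List.take_take, min_eq_left hk]
    _ = (Q.take j).take i := by rw [take_ins hj]
    _ = Q.take i := by rw [List.take_take, min_eq_left hk]

lemma take_ins_of_ge {k : ℕ} (hj : j ≤ Q.length) (hk : j ≤ k) :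
    (ins r Q j).take k
      = Q.take j ++ ((pat r).take (k - j) ++ (Q.drop j).take (k - j - (r+2))) := by
  rw [ins, List.take_append, List.take_append]
  have h1 : (Q.take j).length = j := by rw [List.length_take]; omega
  rw [h1, List.take_of_length_le (by rw [h1]; omega), pat_length]

lemma motzkin_ins_iff (hj : j ≤ Q.length) :
    IsMotzkin (ins r Q j) ↔ IsMotzkin Q := by
  have hcount : ∀ x : Step, (ins r Q j).count x
      = (Q.take j).count x + ((pat r).count x + (Q.drop j).count x) := by
    intro x; rw [ins, List.count_append, List.count_append]
  have hcQ : ∀ x : Step, Q.count x = (Q.take j).count x + (Q.drop j).count x := by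
    intro x; conv_lhs => rw [← List.take_append_drop j Q]
    rw [List.count_append]
  constructor
  · rintro ⟨h1, h2⟩
    constructor
    · intro k
      rcases le_or_gt k j with hk | hk
      · have e : Q.take k = (ins r Q j).take k := (take_ins_of_le hj hk).symm
        rw [e]; exact h1 k
      · have e : (ins r Q j).take (k + (r+2))
            = Q.take j ++ ((pat r) ++ (Q.drop j).take (k - j)) := by
          rw [take_ins_of_ge hj (by omega)]
          congr 2
          · rw [List.take_of_length_le (by rw [pat_length]; omega)]
          · congr 1; omega
        have e2 : Q.take k = Q.take j ++ (Q.drop j).take (k - j) := by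
          rw [← List.take_add]; congr 1; omega
        have := h1 (k + (r+2))
        rw [e] at this
        rw [e2]
        simp only [List.count_append, count_pat_U, count_pat_D] at this ⊢
        omega
    · have hU := hcount Step.U
      have hD := hcount Step.D
      rw [count_pat_U] at hU; rw [count_pat_D] at hD
      have := hcQ Step.U; have := hcQ Step.D
      omega
  · rintro ⟨h1, h2⟩
    constructor
    · intro k
      rcases le_or_gt k j with hk | hk
      · rw [take_ins_of_le hj hk]; exact h1 k
      rcases le_or_gt k (j + (r+2)) with hk2 | hk2
      · -- ins.take k = Q.take j ++ pat.take (k - j)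
        have e : (ins r Q j).take k = Q.take j ++ (pat r).take (k - j) := by
          rw [take_ins_of_ge hj (by omega), show k - j - (r+2) = 0 by omega,
            List.take_zero, List.append_nil]
        rw [e]
        simp only [List.count_append]
        exact Nat.add_le_add (h1 j) (count_pat_take _)
      · have e : (ins r Q j).take k
            = Q.take j ++ ((pat r) ++ (Q.drop j).take (k - j - (r+2))) := by
          rw [take_ins_of_ge hj (by omega)]
          congr 2
          rw [List.take_of_length_le (by rw [pat_length]; omega)]
        have e2 : Q.take (k - (r+2)) = Q.take j ++ (Q.drop j).take (k - j - (r+2)) := by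
          rw [← List.take_add]; congr 1; omega
        have := h1 (k - (r+2))
        rw [e2] at this
        rw [e]
        simp only [List.count_append, count_pat_U, count_pat_D] at this ⊢
        omega
    · have hU := hcount Step.U
      have hD := hcount Step.D
      rw [count_pat_U] at hU; rw [count_pat_D] at hD
      have := hcQ Step.U; have := hcQ Step.D
      omega

lemma motzkin_rem (h : IsPl r l i) (hl : IsMotzkin l) : IsMotzkin (rem r l i) := by
  have hi : i ≤ (rem r l i).length := by
    rw [rem_length h]
    have := isPl_le_length h
    omega
  rw [← motzkin_ins_iff hi, ins_rem h]
  exact hl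

end MP

namespace MP
open List Finset

variable {r : ℕ} {Q l : List Step} {i j : ℕ}

def PSet (r : ℕ) (l : List Step) : Finset ℕ :=
  (Finset.range l.length).filter
    (fun i => (l.drop i).take (r + 2)
      = Step.U :: (List.replicate r Step.H ++ [Step.D]))

lemma plateauCountR_eq (r : ℕ) (l : List Step) :
    plateauCountR r l = (PSet r l).card := rfl

lemma mem_PSet : i ∈ PSet r l ↔ IsPl r l i := by
  rw [PSet, Finset.mem_filter, Finset.mem_range]
  constructor
  · exact fun h => h.2
  · intro h
    exact ⟨by have := isPl_le_length h; omega, h⟩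

def Dst (r : ℕ) (Q : List Step) (j : ℕ) : Finset ℕ :=
  (PSet r Q).filter (fun i => i < j ∧ j < i + (r+2))

lemma Dst_card_le_one : (Dst r Q j).card ≤ 1 := by
  rw [Finset.card_le_one]
  intro a ha b hb
  rw [Dst, Finset.mem_filter] at ha hb
  obtain ⟨ha1, ha2, ha3⟩ := ha
  obtain ⟨hb1, hb2, hb3⟩ := hb
  rw [mem_PSet] at ha1 hb1
  by_contra hne
  rcases Nat.lt_or_ge a b with h | h
  · exact isPl_disjoint ha1 hb1 h (by omega)
  · rcases Nat.lt_or_ge b a with h' | h'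
    · exact isPl_disjoint hb1 ha1 h' (by omega)
    · exact hne (by omega)

def Intr (r : ℕ) (Q : List Step) : Finset ℕ :=
  (PSet r Q).biUnion (fun i => Finset.Ioo i (i + (r+2)))

lemma mem_Intr : j ∈ Intr r Q ↔ (Dst r Q j).Nonempty := by
  rw [Intr, Finset.mem_biUnion]
  constructor
  · rintro ⟨i, hi, hj⟩
    rw [Finset.mem_Ioo] at hj
    exact ⟨i, by rw [Dst, Finset.mem_filter]; exact ⟨hi, hj.1, hj.2⟩⟩
  · rintro ⟨i, hi⟩
    rw [Dst, Finset.mem_filter] at hi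
    exact ⟨i, hi.1, Finset.mem_Ioo.2 ⟨hi.2.1, hi.2.2⟩⟩

lemma Intr_subset : Intr r Q ⊆ Finset.range (Q.length + 1) := by
  intro j hj
  rw [Intr, Finset.mem_biUnion] at hj
  obtain ⟨i, hi, hj⟩ := hj
  rw [mem_PSet] at hi
  have := isPl_le_length hi
  rw [Finset.mem_Ioo] at hj
  rw [Finset.mem_range]
  omega

lemma card_Intr : (Intr r Q).card = (r+1) * (PSet r Q).card := by
  rw [Intr, Finset.card_biUnion]
  · rw [Finset.sum_congr rfl (fun i _ => Nat.card_Ioo i (i + (r+2)))]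
    simp [Finset.sum_const, mul_comm]
  · intro a ha b hb hne
    rw [Finset.mem_coe, mem_PSet] at ha hb
    have hsep : a + (r+2) ≤ b ∨ b + (r+2) ≤ a := by
      by_contra hcon
      push_neg at hcon
      rcases Nat.lt_or_ge a b with h | h
      · exact isPl_disjoint ha hb h (by omega)
      · rcases Nat.lt_or_ge b a with h' | h'
        · exact isPl_disjoint hb ha h' (by omega)
        · exact hne (by omega)
    rw [Function.onFun, Finset.disjoint_left]
    intro x hx hx'
    rw [Finset.mem_Ioo] at hx hx'
    omega

lemma card_PSet_ins (hj : j ≤ Q.length) :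
    (PSet r (ins r Q j)).card + (Dst r Q j).card = (PSet r Q).card + 1 := by
  classical
  set A := (PSet r Q).filter (fun i => i + (r+2) ≤ j) with hA
  set B := (PSet r Q).filter (fun i => j ≤ i) with hB
  have hsplit : (PSet r Q).card = A.card + B.card + (Dst r Q j).card := by
    have h1 := Finset.card_filter_add_card_filter_not
      (s := PSet r Q) (p := fun i => i + (r+2) ≤ j)
    have h2 := Finset.card_filter_add_card_filter_not
      (s := (PSet r Q).filter (fun i => ¬ (i + (r+2) ≤ j))) (p := fun i => j ≤ i)
    rw [Finset.filter_filter, Finset.filter_filter] at h2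
    have e1 : Finset.filter (fun i => ¬(i + (r + 2) ≤ j) ∧ j ≤ i) (PSet r Q) = B := by
      rw [hB]
      apply Finset.filter_congr
      intro x _
      constructor
      · exact fun h => h.2
      · intro h; exact ⟨by omega, h⟩
    have e2 : Finset.filter (fun i => ¬(i + (r + 2) ≤ j) ∧ ¬ j ≤ i) (PSet r Q)
        = Dst r Q j := by
      rw [Dst]
      apply Finset.filter_congr
      intro x _
      constructor
      · intro h; omega
      · intro h; omega
    rw [e1, e2] at h2
    rw [← hA] at h1
    omega
  have hPins : PSet r (ins r Q j) = insert j (A ∪ B.image (fun i => i + (r+2))) := by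
    ext i
    rw [Finset.mem_insert, Finset.mem_union, Finset.mem_image, mem_PSet,
      isPl_ins_iff hj]
    constructor
    · rintro (h | ⟨h1, h2⟩ | ⟨i₀, h1, h2, h3⟩)
      · exact Or.inl h
      · exact Or.inr (Or.inl (Finset.mem_filter.2 ⟨mem_PSet.2 h1, h2⟩))
      · exact Or.inr (Or.inr ⟨i₀, Finset.mem_filter.2 ⟨mem_PSet.2 h1, h2⟩, h3.symm⟩)
    · rintro (h | h | ⟨i₀, h1, h2⟩)
      · exact Or.inl h
      · rw [Finset.mem_filter, mem_PSet] at h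
        exact Or.inr (Or.inl ⟨h.1, h.2⟩)
      · rw [Finset.mem_filter, mem_PSet] at h1
        exact Or.inr (Or.inr ⟨i₀, h1.1, h1.2, h2.symm⟩)
  have hjA : j ∉ A := by
    rw [hA, Finset.mem_filter]
    rintro ⟨_, h⟩; omega
  have hjB : j ∉ B.image (fun i => i + (r+2)) := by
    rw [Finset.mem_image]
    rintro ⟨i₀, hi₀, h⟩
    rw [hB, Finset.mem_filter] at hi₀
    omega
  have hdisj : Disjoint A (B.image (fun i => i + (r+2))) := by
    rw [Finset.disjoint_left]
    intro x hx hx'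
    rw [hA, Finset.mem_filter] at hx
    rw [Finset.mem_image] at hx'
    obtain ⟨i₀, hi₀, h⟩ := hx'
    rw [hB, Finset.mem_filter] at hi₀
    omega
  have hIm : (B.image (fun i => i + (r+2))).card = B.card :=
    Finset.card_image_of_injective _ (fun a b h => by omega)
  rw [hPins, Finset.card_insert_of_notMem (by
      rw [Finset.mem_union]; rintro (h | h); exact hjA h; exact hjB h),
    Finset.card_union_of_disjoint hdisj, hIm]
  omega

end MP

namespace MP
open List Finset

variable {r : ℕ} {Q l : List Step} {i j p : ℕ}

/-- the set of insertion positions `j ≤ Q.length` such that the result has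
exactly `p` plateaus -/
def Pos (r : ℕ) (Q : List Step) (p : ℕ) : Finset ℕ :=
  (Finset.range (Q.length + 1)).filter
    (fun j => (PSet r (ins r Q j)).card = p)

lemma dst_one_iff (hj : j ≤ Q.length) :
    (Dst r Q j).card = 1 ↔ j ∈ Intr r Q := by
  rw [mem_Intr]
  constructor
  · intro h
    rw [← Finset.card_pos, h]
    omega
  · intro h
    have h1 := Dst_card_le_one (r := r) (Q := Q) (j := j)
    have h2 := Finset.card_pos.2 h
    omega

lemma pos_of_eq (hq : (PSet r Q).card = p) : Pos r Q p = Intr r Q := by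
  ext j
  rw [Pos, Finset.mem_filter, Finset.mem_range]
  constructor
  · rintro ⟨h1, h2⟩
    have := card_PSet_ins (r := r) (Q := Q) (j := j) (by omega)
    rw [← dst_one_iff (by omega : j ≤ Q.length)]
    omega
  · intro h
    have hj : j ≤ Q.length := by
      have := Intr_subset h
      rw [Finset.mem_range] at this
      omega
    have := card_PSet_ins (r := r) (Q := Q) (j := j) hj
    have := (dst_one_iff hj).2 h
    exact ⟨by omega, by omega⟩

lemma pos_of_pred (hq : (PSet r Q).card + 1 = p) :
    Pos r Q p = Finset.range (Q.length + 1) \ Intr r Q := by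
  ext j
  rw [Pos, Finset.mem_filter, Finset.mem_sdiff]
  simp only [Finset.mem_range]
  constructor
  · rintro ⟨h1, h2⟩
    refine ⟨h1, ?_⟩
    intro hin
    have := card_PSet_ins (r := r) (Q := Q) (j := j) (by omega)
    have := (dst_one_iff (by omega : j ≤ Q.length)).2 hin
    omega
  · rintro ⟨h1, h2⟩
    refine ⟨h1, ?_⟩
    have hj : j ≤ Q.length := by omega
    have hc := card_PSet_ins (r := r) (Q := Q) (j := j) hj
    have hd : (Dst r Q j).card ≠ 1 := fun h => h2 ((dst_one_iff hj).1 h)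
    have := Dst_card_le_one (r := r) (Q := Q) (j := j)
    omega

lemma pos_of_ne (hq1 : (PSet r Q).card ≠ p) (hq2 : (PSet r Q).card + 1 ≠ p) :
    Pos r Q p = ∅ := by
  rw [Finset.eq_empty_iff_forall_notMem]
  intro j hjmem
  rw [Pos, Finset.mem_filter, Finset.mem_range] at hjmem
  obtain ⟨h1, h2⟩ := hjmem
  have := card_PSet_ins (r := r) (Q := Q) (j := j) (by omega)
  have := Dst_card_le_one (r := r) (Q := Q) (j := j)
  omega

lemma card_pos_of_eq (hq : (PSet r Q).card = p) :
    (Pos r Q p).card = (r+1) * p := by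
  rw [pos_of_eq hq, card_Intr, hq]

lemma card_pos_of_pred (hq : (PSet r Q).card + 1 = p) :
    (Pos r Q p).card + (r+1) * (p - 1) = Q.length + 1 := by
  rw [pos_of_pred hq, Finset.card_sdiff_of_subset Intr_subset, Finset.card_range, card_Intr]
  have h1 : (Intr r Q).card ≤ Q.length + 1 := by
    rw [← Finset.card_range (Q.length + 1)]
    exact Finset.card_le_card Intr_subset
  rw [card_Intr] at h1
  have : (PSet r Q).card = p - 1 := by omega
  rw [this] at h1 ⊢
  omega

instance : Fintype Step :=
  ⟨{Step.U, Step.H, Step.D}, by intro x; cases x <;> simp⟩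

def lists (n : ℕ) : Finset (List Step) :=
  (Finset.univ : Finset (Fin n → Step)).image (fun f => List.ofFn f)

lemma mem_lists {n : ℕ} : l ∈ lists n ↔ l.length = n := by
  rw [lists, Finset.mem_image]
  constructor
  · rintro ⟨f, _, rfl⟩
    simp
  · intro h
    subst h
    exact ⟨l.get, Finset.mem_univ _, List.ofFn_get l⟩

noncomputable def MSet (n : ℕ) : Finset (List Step) :=
  @Finset.filter _ IsMotzkin (Classical.decPred _) (lists n)

noncomputable def MPSet (r n p : ℕ) : Finset (List Step) :=
  (MSet n).filter (fun l => (PSet r l).card = p)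

lemma mem_MSet {n : ℕ} : l ∈ MSet n ↔ l.length = n ∧ IsMotzkin l := by
  classical
  rw [MSet, Finset.mem_filter, mem_lists]

lemma mem_MPSet {n : ℕ} : l ∈ MPSet r n p ↔
    l.length = n ∧ IsMotzkin l ∧ (PSet r l).card = p := by
  rw [MPSet, Finset.mem_filter, mem_MSet, and_assoc]

end MP

namespace MP
open List Finset

lemma card_MPSet_mul (r n p : ℕ) :
    p * (MPSet r n p).card
      = ((MPSet r n p).sigma (fun l => PSet r l)).card := by
  rw [Finset.card_sigma]
  rw [Finset.sum_congr rfl (fun l hl => (mem_MPSet.1 hl).2.2)]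
  rw [Finset.sum_const, smul_eq_mul, mul_comm]

lemma card_sigma_eq (r m p : ℕ) :
    ((MPSet r (m + (r+2)) p).sigma (fun l => PSet r l)).card
      = ((MSet m).sigma (fun Q => Pos r Q p)).card := by
  apply Finset.card_nbij' (fun x => ⟨rem r x.1 x.2, x.2⟩)
    (fun y => ⟨ins r y.1 y.2, y.2⟩)
  · rintro ⟨l, i⟩ hx
    rw [Finset.mem_coe, Finset.mem_sigma] at hx
    obtain ⟨hl, hi⟩ := hx
    rw [mem_MPSet] at hl
    obtain ⟨hlen, hmotz, hpc⟩ := hl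
    rw [mem_PSet] at hi
    have hle := isPl_le_length hi
    rw [hlen] at hle
    dsimp only at hi hle ⊢
    rw [Finset.mem_coe, Finset.mem_sigma]
    dsimp only
    constructor
    · rw [mem_MSet]
      exact ⟨by rw [rem_length hi, hlen]; omega, motzkin_rem hi hmotz⟩
    · rw [Pos, Finset.mem_filter, Finset.mem_range, rem_length hi, hlen]
      refine ⟨by omega, ?_⟩
      rw [ins_rem hi]
      exact hpc
  · rintro ⟨Q, j⟩ hy
    rw [Finset.mem_coe, Finset.mem_sigma] at hy
    obtain ⟨hQ, hj⟩ := hy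
    rw [mem_MSet] at hQ
    rw [Pos, Finset.mem_filter, Finset.mem_range] at hj
    dsimp only at hj ⊢
    have hjle : j ≤ Q.length := by omega
    rw [Finset.mem_coe, Finset.mem_sigma]
    dsimp only
    constructor
    · rw [mem_MPSet]
      exact ⟨by rw [ins_length hjle, hQ.1], (motzkin_ins_iff hjle).2 hQ.2, hj.2⟩
    · exact mem_PSet.2 (isPl_ins_self hjle)
  · rintro ⟨l, i⟩ hx
    rw [Finset.mem_coe, Finset.mem_sigma] at hx
    have hi := mem_PSet.1 hx.2
    simp only
    rw [ins_rem hi]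
  · rintro ⟨Q, j⟩ hy
    rw [Finset.mem_coe, Finset.mem_sigma] at hy
    rw [Pos, Finset.mem_filter, Finset.mem_range] at hy
    dsimp only at hy
    have hjle : j ≤ Q.length := by omega
    simp only
    rw [rem_ins hjle]

lemma main_count (r m p : ℕ) (hp : 1 ≤ p) :
    p * (MPSet r (m + (r+2)) p).card + (r+1) * (p-1) * (MPSet r m (p-1)).card
      = (r+1) * p * (MPSet r m p).card + (m+1) * (MPSet r m (p-1)).card := by
  classical
  have hA : p * (MPSet r (m + (r+2)) p).card
      = ∑ Q ∈ MSet m, (Pos r Q p).card := by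
    rw [card_MPSet_mul, card_sigma_eq, Finset.card_sigma]
  have hsplit1 := Finset.sum_filter_add_sum_filter_not (MSet m)
    (fun Q => (PSet r Q).card = p) (fun Q => (Pos r Q p).card)
  have hsplit2 := Finset.sum_filter_add_sum_filter_not
    ((MSet m).filter (fun Q => ¬ (PSet r Q).card = p))
    (fun Q => (PSet r Q).card = p - 1) (fun Q => (Pos r Q p).card)
  have he1 : (MSet m).filter (fun Q => (PSet r Q).card = p) = MPSet r m p := by
    rw [MPSet]
  have he2 : ((MSet m).filter (fun Q => ¬ (PSet r Q).card = p)).filter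
      (fun Q => (PSet r Q).card = p - 1) = MPSet r m (p-1) := by
    rw [Finset.filter_filter, MPSet]
    apply Finset.filter_congr
    intro Q _
    constructor
    · exact fun h => h.2
    · intro h
      exact ⟨by omega, h⟩
  have hz : ∑ Q ∈ ((MSet m).filter (fun Q => ¬ (PSet r Q).card = p)).filter
      (fun Q => ¬ (PSet r Q).card = p - 1), (Pos r Q p).card = 0 := by
    apply Finset.sum_eq_zero
    intro Q hQ
    rw [Finset.mem_filter, Finset.mem_filter] at hQ
    rw [pos_of_ne hQ.1.2 (by have := hQ.2; omega), Finset.card_empty]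
  have hsum1 : ∑ Q ∈ MPSet r m p, (Pos r Q p).card
      = (r+1) * p * (MPSet r m p).card := by
    rw [Finset.sum_congr rfl
      (fun Q hQ => card_pos_of_eq (mem_MPSet.1 hQ).2.2)]
    rw [Finset.sum_const, smul_eq_mul, mul_comm]
  have hsum2 : ∑ Q ∈ MPSet r m (p-1), ((Pos r Q p).card + (r+1) * (p-1))
      = (m+1) * (MPSet r m (p-1)).card := by
    rw [Finset.sum_congr rfl (fun Q hQ => ?_)]
    · rw [Finset.sum_const, smul_eq_mul, mul_comm]
    · obtain ⟨hlen, _, hpc⟩ := mem_MPSet.1 hQ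
      rw [← hlen]
      exact card_pos_of_pred (by omega)
  rw [he1] at hsplit1
  rw [he2, hz] at hsplit2
  rw [Finset.sum_add_distrib, Finset.sum_const, smul_eq_mul,
    mul_comm ((MPSet r m (p-1)).card) ((r+1)*(p-1))] at hsum2
  omega

lemma MPSet_card_zero (r n p : ℕ) (hp : 1 ≤ p) (hn : n < r + 2) :
    (MPSet r n p).card = 0 := by
  rw [Finset.card_eq_zero, Finset.eq_empty_iff_forall_notMem]
  intro l hl
  obtain ⟨hlen, _, hpc⟩ := mem_MPSet.1 hl
  have : (PSet r l).Nonempty := Finset.card_pos.1 (by omega)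
  obtain ⟨i, hi⟩ := this
  have := isPl_le_length (mem_PSet.1 hi)
  omega

lemma cR_eq (r n p : ℕ) : cR r (n : ℤ) (p : ℤ) = (MPSet r n p).card := by
  rw [cR, if_pos ⟨Int.natCast_nonneg n, Int.natCast_nonneg p⟩]
  simp only [Int.toNat_natCast]
  rw [← Nat.card_eq_finsetCard]
  apply Nat.card_congr
  apply Equiv.subtypeEquivRight
  intro l
  rw [mem_MPSet, plateauCountR_eq]

end MP

namespace MP
open PowerSeries

lemma key_q (r m p : ℕ) (hp : 1 ≤ p) :
    (p : ℚ) * ((MPSet r (m + (r+2)) p).card : ℚ)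
        + ((r : ℚ)+1) * (p : ℚ) * ((MPSet r m (p-1)).card : ℚ)
      = ((r : ℚ)+1) * (p : ℚ) * ((MPSet r m p).card : ℚ)
        + ((m : ℚ) + (r : ℚ) + 2) * ((MPSet r m (p-1)).card : ℚ) := by
  obtain ⟨p', rfl⟩ : ∃ p', p = p' + 1 := ⟨p-1, by omega⟩
  have h := main_count r m (p'+1) (by omega)
  simp only [Nat.add_sub_cancel] at h ⊢
  have hq := congrArg (fun k : ℕ => (k : ℚ)) h
  push_cast at hq ⊢
  linear_combination hq

lemma coeff_X_pow_mul' {R : Type*} [CommSemiring R] (f : PowerSeries R) (k n : ℕ) :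
    (coeff n) (X ^ k * f) = if k ≤ n then coeff (n - k) f else 0 := by
  rw [mul_comm, PowerSeries.coeff_mul_X_pow']

lemma coeff_X_mul_deriv {R : Type*} [CommRing R] (S : PowerSeries R) (n : ℕ) :
    (coeff n) (X * (d⁄dX R) S) = coeff n S * (n : R) := by
  cases n with
  | zero => rw [coeff_zero_X_mul]; simp
  | succ k =>
    rw [coeff_succ_X_mul, PowerSeries.coeff_derivative]
    push_cast
    ring

end MP


open PowerSeries in
/-- Working in `ℚ[[x,y]]` realized as `(ℚ[[y]])[[x]]`: the outer variable is `x`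
and the inner variable is `y`.  `g` is the bivariate generating function for
plateaus of length `r`, `F = g(x,0)`, and `J` is the formal antiderivative of `g`
in `y` with `J(x,0) = 0` (characterized by: its constant coefficient in `y`
vanishes and its `y`-derivative, taken coefficientwise in `x`, is `g`). -/
theorem integral_differential_form_r (r : ℕ) (hr : 1 ≤ r)
    (g J F : PowerSeries (PowerSeries ℚ))
    (hg : g = PowerSeries.mk fun n => PowerSeries.mk fun p => (cR r n p : ℚ))
    (hF : F = PowerSeries.mk fun n => PowerSeries.C (R := ℚ) (cR r n 0 : ℚ))
    (hJ0 : ∀ n : ℕ, PowerSeries.constantCoeff (R := ℚ) (PowerSeries.coeff (R := PowerSeries ℚ) n J) = 0)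
    (hJ' : ∀ n : ℕ, (d⁄dX ℚ) (PowerSeries.coeff (R := PowerSeries ℚ) n J)
        = PowerSeries.coeff (R := PowerSeries ℚ) n g) :
    (1 - ((r : PowerSeries (PowerSeries ℚ)) + 1) * X ^ (r + 2) * (1 - PowerSeries.C (R := PowerSeries ℚ) X)) * g
      = (1 - ((r : PowerSeries (PowerSeries ℚ)) + 1) * X ^ (r + 2)) * F
        + X * (d⁄dX (PowerSeries ℚ)) (X ^ (r + 2) * J) := by
  classical
  have hGc : ∀ n : ℕ, (PowerSeries.coeff (R := PowerSeries ℚ) n) g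
      = PowerSeries.mk (fun p => (cR r n p : ℚ)) := by
    intro n; rw [hg, PowerSeries.coeff_mk]
  have hFc : ∀ n : ℕ, (PowerSeries.coeff (R := PowerSeries ℚ) n) F
      = PowerSeries.C (R := ℚ) ((cR r n 0 : ℚ)) := by
    intro n; rw [hF, PowerSeries.coeff_mk]
  obtain ⟨b, hb⟩ : ∃ b : ℚ, b = (r : ℚ) + 1 := ⟨_, rfl⟩
  obtain ⟨a, ha⟩ : ∃ a : PowerSeries ℚ, a = PowerSeries.C (R := ℚ) b := ⟨_, rfl⟩
  have hc : ((r : PowerSeries (PowerSeries ℚ)) + 1)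
      = PowerSeries.C (R := PowerSeries ℚ) a := by
    rw [ha, hb, map_add, map_natCast, map_one, map_add, map_natCast, map_one]
  have hexp : (1 - ((r : PowerSeries (PowerSeries ℚ)) + 1) * X ^ (r + 2)
        * (1 - PowerSeries.C (R := PowerSeries ℚ) X)) * g
      = g - PowerSeries.C (R := PowerSeries ℚ) a * (X^(r+2) * g)
        + PowerSeries.C (R := PowerSeries ℚ) a
          * (X^(r+2) * (PowerSeries.C (R := PowerSeries ℚ) X * g)) := by
    rw [← hc]; ring
  have hexp2 : (1 - ((r : PowerSeries (PowerSeries ℚ)) + 1) * X ^ (r + 2)) * F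
      = F - PowerSeries.C (R := PowerSeries ℚ) a * (X^(r+2) * F) := by
    rw [← hc]; ring
  rw [hexp, hexp2]
  apply PowerSeries.ext; intro n
  simp only [map_sub, map_add, PowerSeries.coeff_C_mul, MP.coeff_X_mul_deriv,
    MP.coeff_X_pow_mul']
  rcases lt_or_ge n (r+2) with hn | hn
  · simp only [if_neg (by omega : ¬ (r + 2 ≤ n))]
    rw [hGc, hFc]
    simp only [mul_zero, zero_mul, sub_zero, add_zero]
    apply PowerSeries.ext; intro p
    rw [PowerSeries.coeff_mk, PowerSeries.coeff_C]
    cases p with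
    | zero => simp
    | succ p' =>
      rw [if_neg (by omega)]
      rw [MP.cR_eq r n (p'+1)]
      rw [MP.MPSet_card_zero r n (p'+1) (by omega) hn]
      simp
  · obtain ⟨m, rfl⟩ : ∃ m, n = m + (r+2) := ⟨n - (r+2), by omega⟩
    simp only [if_pos (by omega : r + 2 ≤ m + (r+2)), Nat.add_sub_cancel]
    rw [hGc, hGc, hFc, hFc, ha]
    obtain ⟨d, hd⟩ : ∃ d : ℚ, d = ((m + (r+2) : ℕ) : ℚ) := ⟨_, rfl⟩
    rw [show ((m + (r+2) : ℕ) : PowerSeries ℚ) = PowerSeries.C (R := ℚ) d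
      from by rw [hd, map_natCast]]
    rw [mul_comm ((PowerSeries.coeff (R := PowerSeries ℚ) m) J) (PowerSeries.C (R := ℚ) d)]
    apply PowerSeries.ext; intro p
    simp only [map_sub, map_add, PowerSeries.coeff_C_mul, PowerSeries.coeff_mk,
      PowerSeries.coeff_C]
    cases p with
    | zero =>
      have hJ0m : (PowerSeries.coeff (R := ℚ) 0) ((PowerSeries.coeff (R := PowerSeries ℚ) m) J) = 0 := by
        rw [PowerSeries.coeff_zero_eq_constantCoeff]
        exact hJ0 m
      rw [PowerSeries.coeff_zero_X_mul, hJ0m]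
      norm_num
    | succ p' =>
      rw [PowerSeries.coeff_succ_X_mul, if_neg (by omega), if_neg (by omega),
        PowerSeries.coeff_mk]
      have h1 := congrArg (PowerSeries.coeff (R := ℚ) p') (hJ' m)
      rw [PowerSeries.coeff_derivative, hGc m, PowerSeries.coeff_mk,
        MP.cR_eq r m p'] at h1
      have hkey := MP.key_q r m (p'+1) (by omega)
      simp only [Nat.add_sub_cancel] at hkey
      rw [MP.cR_eq r (m + (r+2)) (p'+1), MP.cR_eq r m (p'+1), MP.cR_eq r m p']
      refine mul_left_cancel₀ (show ((p' + 1 : ℕ) : ℚ) ≠ 0 by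
        exact_mod_cast Nat.succ_ne_zero p') ?_
      rw [hb, hd]
      push_cast at hkey h1 ⊢
      linear_combination hkey - ((m : ℚ) + (r : ℚ) + 2) * h1
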